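/- arXiv:1702.03849 — 3 statements merged into one kernel-verified Lean document; each statement's English description precedes it below -/
import Mathlib

section
/- Let f : ℝ^d → ℝ be C¹, nonnegative, and (m,b)-dissipative, i.e., ⟨w, ∇f(w)⟩ ≥ m‖w‖² - b for all w ∈ ℝ^d with m > 0, b ≥ 0. Then for all w ∈ ℝ^d, f(w) ≥ (m/3)‖w‖² - (b/2)·log 3. -/
/-!
Along the ray `t ↦ t • w`, dissipativity says `t ⟪w, ∇f(t • w)⟫ ≥ m t² ‖w‖² - b`, i.e. the function
`φ t = f (t • w) - m ‖w‖² t² / 2 + b log t` is nondecreasing on `(0, ∞)`. Comparing `φ 1` with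
`φ (1/√3)` and using `f ≥ 0` at `w / √3` gives the bound.
-/

open Real Set

section Ray

variable {E : Type*} [NormedAddCommGroup E] [InnerProductSpace ℝ E] [CompleteSpace E]
  {f : E → ℝ} {m b : ℝ}

theorem hasDerivAt_comp_smul_right {w : E} {t : ℝ} (hf : DifferentiableAt ℝ f (t • w)) :
    HasDerivAt (fun s : ℝ => f (s • w)) (inner ℝ (gradient f (t • w)) w) t := by
  have hray : HasDerivAt (fun s : ℝ => s • w) w t := by
    simpa using (hasDerivAt_id t).smul_const w
  simpa [Function.comp_def] using hf.hasGradientAt.hasFDerivAt.comp_hasDerivAt t hray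

theorem le_inner_gradient_smul_of_dissipative
    (hdissip : ∀ w : E, inner ℝ w (gradient f w) ≥ m * ‖w‖ ^ 2 - b) (w : E) {t : ℝ} (ht : 0 < t) :
    m * ‖w‖ ^ 2 * t - b / t ≤ inner ℝ (gradient f (t • w)) w := by
  have h := hdissip (t • w)
  rw [real_inner_smul_left, norm_smul, mul_pow, Real.norm_eq_abs, sq_abs] at h
  rw [real_inner_comm]
  have hbt : b / t * t = b := div_mul_cancel₀ b ht.ne'
  refine le_of_mul_le_mul_right ?_ ht
  nlinarith

theorem monotoneOn_ray_of_dissipative (hf : Differentiable ℝ f)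
    (hdissip : ∀ w : E, inner ℝ w (gradient f w) ≥ m * ‖w‖ ^ 2 - b) (w : E) :
    MonotoneOn (fun t : ℝ => f (t • w) - m * ‖w‖ ^ 2 * t ^ 2 / 2 + b * log t) (Ioi 0) := by
  have hderiv : ∀ t ∈ Ioi (0 : ℝ),
      HasDerivAt (fun t : ℝ => f (t • w) - m * ‖w‖ ^ 2 * t ^ 2 / 2 + b * log t)
        (inner ℝ (gradient f (t • w)) w - m * ‖w‖ ^ 2 * t + b / t) t := by
    intro t ht
    have hquad : HasDerivAt (fun t : ℝ => m * ‖w‖ ^ 2 * t ^ 2 / 2) (m * ‖w‖ ^ 2 * t) t := by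
      refine (((hasDerivAt_pow 2 t).const_mul (m * ‖w‖ ^ 2)).div_const 2).congr_deriv ?_
      push_cast
      ring
    exact (((hasDerivAt_comp_smul_right (hf (t • w))).sub hquad).add
      ((hasDerivAt_log (ne_of_gt ht)).const_mul b)).congr_deriv (by rw [div_eq_mul_inv])
  refine monotoneOn_of_hasDerivWithinAt_nonneg (convex_Ioi 0)
    (fun t ht => (hderiv t ht).continuousAt.continuousWithinAt)
    (fun t ht => (hderiv t (interior_subset ht)).hasDerivWithinAt) fun t ht => ?_
  rw [interior_Ioi] at ht
  linarith [le_inner_gradient_smul_of_dissipative hdissip w ht]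

end Ray

theorem f_quadratic_lower_bound_general
    {d : ℕ} (f : EuclideanSpace ℝ (Fin d) → ℝ) (m b : ℝ)
    (hf : ContDiff ℝ 1 f)
    (hnonneg : ∀ w, 0 ≤ f w)
    (hdissip : ∀ w : EuclideanSpace ℝ (Fin d),
      (inner ℝ w (gradient f w) : ℝ) ≥ m * ‖w‖ ^ 2 - b) :
    ∀ w : EuclideanSpace ℝ (Fin d),
      f w ≥ m / 3 * ‖w‖ ^ 2 - b / 2 * Real.log 3 := by
  intro w
  set t₀ : ℝ := (√3)⁻¹
  have ht₀ : 0 < t₀ := by positivity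
  have ht₀_le : t₀ ≤ 1 := inv_le_one_of_one_le₀ (by simp [Real.one_le_sqrt])
  have ht₀_sq : t₀ ^ 2 = 1 / 3 := by simp [t₀, inv_pow]
  have hlog : log t₀ = -(log 3 / 2) := by simp [t₀, Real.log_inv, Real.log_sqrt]
  have hmono := monotoneOn_ray_of_dissipative (hf.differentiable one_ne_zero) hdissip w
    ht₀ (mem_Ioi.2 one_pos) ht₀_le
  simp only [one_smul, one_pow, log_one, mul_zero, add_zero, ht₀_sq, hlog] at hmono
  linarith [hnonneg (t₀ • w)]

theorem f_quadratic_lower_bound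
    {d : ℕ} (f : EuclideanSpace ℝ (Fin d) → ℝ) (m b : ℝ)
    (hm : 0 < m) (hb : 0 ≤ b)
    (hf : ContDiff ℝ 1 f)
    (hnonneg : ∀ w, 0 ≤ f w)
    (hdissip : ∀ w : EuclideanSpace ℝ (Fin d),
      (inner ℝ w (gradient f w) : ℝ) ≥ m * ‖w‖ ^ 2 - b) :
    ∀ w : EuclideanSpace ℝ (Fin d),
      f w ≥ m / 3 * ‖w‖ ^ 2 - b / 2 * Real.log 3 :=
  f_quadratic_lower_bound_general f m b hf hnonneg hdissip
end

section
/- Let μ and ν be Borel probability measures on ℝ^d with finite second moments, and let g : ℝ^d → ℝ be C¹ with ‖∇g(w)‖ ≤ c₁‖w‖ + c₂ for all w, where c₁ > 0, c₂ ≥ 0. Set σ² = max(∫‖w‖² dμ(w), ∫‖w‖² dν(w)). Then |∫g dμ - ∫g dν| ≤ (c₁σ + c₂)·W₂(μ, ν), where W₂ is the Euclidean 2-Wasserstein distance. -/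
/-!
Fix a coupling `(V, W)` of `μ` and `ν`. Along the segment from `w` to `v` the point has norm at
most `(1 - t) ‖w‖ + t ‖v‖`, so the affine gradient bound averages to the midpoint value and the
mean value inequality gives `|g v - g w| ≤ (c₁ (‖v‖ + ‖w‖) / 2 + c₂) ‖v - w‖`. Taking expectations
and applying Cauchy–Schwarz bounds `|E g(V) - E g(W)|` by
`(c₁ ‖(‖V‖ + ‖W‖) / 2‖_{L²} + c₂) ‖V - W‖_{L²}`, and `((‖V‖ + ‖W‖) / 2)² ≤ (‖V‖² + ‖W‖²) / 2`
gives `‖(‖V‖ + ‖W‖) / 2‖_{L²} ≤ σ`. It remains to take the infimum over couplings.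
-/

open Real MeasureTheory

/-- The Euclidean 2-Wasserstein distance between two probability measures on
`EuclideanSpace ℝ (Fin d)`: the infimum of `(E‖V - W‖²)^{1/2}` over all
couplings of `μ` and `ν`. -/
noncomputable def wasserstein2 {d : ℕ}
    (μ ν : Measure (EuclideanSpace ℝ (Fin d))) : ℝ :=
  sInf { r : ℝ | ∃ γ : Measure (EuclideanSpace ℝ (Fin d) × EuclideanSpace ℝ (Fin d)),
    IsProbabilityMeasure γ ∧ γ.map Prod.fst = μ ∧ γ.map Prod.snd = ν ∧
    r = (∫ p, ‖p.1 - p.2‖ ^ 2 ∂γ) ^ ((1 : ℝ) / 2) }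

section MeanValue

variable {E : Type*} [NormedAddCommGroup E] [NormedSpace ℝ E]

theorem norm_add_smul_sub_le (v w : E) {t : ℝ} (ht : t ∈ Set.Icc (0 : ℝ) 1) :
    ‖w + t • (v - w)‖ ≤ (1 - t) * ‖w‖ + t * ‖v‖ := by
  have h : w + t • (v - w) = (1 - t) • w + t • v := by
    rw [smul_sub, sub_smul, one_smul]; abel
  rw [h]
  refine (norm_add_le _ _).trans_eq ?_
  rw [norm_smul, norm_smul, norm_of_nonneg (sub_nonneg.2 ht.2), norm_of_nonneg ht.1]

theorem abs_sub_le_of_norm_fderiv_le_affine {g : E → ℝ} {c₁ c₂ : ℝ} (hc₁ : 0 ≤ c₁)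
    (hg : Differentiable ℝ g) (hgrow : ∀ w, ‖fderiv ℝ g w‖ ≤ c₁ * ‖w‖ + c₂) (v w : E) :
    |g v - g w| ≤ (c₁ * ((‖v‖ + ‖w‖) / 2) + c₂) * ‖v - w‖ := by
  set L : ℝ → E := fun t => w + t • (v - w)
  have hL : ∀ t, HasDerivAt L (v - w) t := fun t =>
    (((hasDerivAt_id t).smul_const (v - w)).const_add w).congr_deriv (one_smul ℝ _)
  have hgL : ∀ t, HasDerivAt (fun t => g (L t) - g w) (fderiv ℝ g (L t) (v - w)) t :=
    fun t => ((hg (L t)).hasFDerivAt.comp_hasDerivAt t (hL t)).sub_const _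
  -- `B` integrates the bound `(c₁ ((1 - t) ‖w‖ + t ‖v‖) + c₂) ‖v - w‖` on `‖(g ∘ L)'‖`.
  set B : ℝ → ℝ := fun t => (c₂ * t + c₁ * (‖w‖ * t + (‖v‖ - ‖w‖) * t ^ 2 / 2)) * ‖v - w‖
  have hB : ∀ t, HasDerivAt B ((c₂ + c₁ * (‖w‖ + (‖v‖ - ‖w‖) * t)) * ‖v - w‖) t := fun t => by
    have := (((hasDerivAt_id t).const_mul c₂).add ((((hasDerivAt_id t).const_mul ‖w‖).add
      (((hasDerivAt_pow 2 t).const_mul (‖v‖ - ‖w‖)).div_const 2)).const_mul c₁)).mul_const ‖v - w‖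
    exact this.congr_deriv (by simp only [Nat.cast_ofNat]; ring)
  have hbound : ∀ t ∈ Set.Ico (0 : ℝ) 1,
      ‖fderiv ℝ g (L t) (v - w)‖ ≤ (c₂ + c₁ * (‖w‖ + (‖v‖ - ‖w‖) * t)) * ‖v - w‖ := by
    intro t ht
    have hLt := norm_add_smul_sub_le v w (Set.Ico_subset_Icc_self ht)
    calc ‖fderiv ℝ g (L t) (v - w)‖ ≤ ‖fderiv ℝ g (L t)‖ * ‖v - w‖ :=
          ContinuousLinearMap.le_opNorm _ _
      _ ≤ (c₁ * ((1 - t) * ‖w‖ + t * ‖v‖) + c₂) * ‖v - w‖ := by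
          gcongr
          exact (hgrow _).trans (by gcongr)
      _ = (c₂ + c₁ * (‖w‖ + (‖v‖ - ‖w‖) * t)) * ‖v - w‖ := by ring
  have key := image_norm_le_of_norm_deriv_right_le_deriv_boundary
    (fun t _ => (hgL t).continuousAt.continuousWithinAt) (fun t _ => (hgL t).hasDerivWithinAt)
    (by simp [L, B]) hB hbound (Set.right_mem_Icc.2 zero_le_one)
  convert key using 1
  · simp [L]
  · simp only [B]; ring

end MeanValue

section Integrability

variable {E : Type*} [NormedAddCommGroup E] [NormedSpace ℝ E] [MeasurableSpace E]
  [OpensMeasurableSpace E]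

theorem integrable_of_norm_fderiv_le_affine {μ : Measure E} [IsFiniteMeasure μ]
    (hμ : MemLp id 2 μ) {g : E → ℝ} {c₁ c₂ : ℝ} (hc₁ : 0 ≤ c₁) (hg : Differentiable ℝ g)
    (hgrow : ∀ w, ‖fderiv ℝ g w‖ ≤ c₁ * ‖w‖ + c₂) : Integrable g μ := by
  have hnorm : MemLp (fun w : E => ‖w‖) 2 μ := hμ.norm
  have hdom : Integrable (fun w => |g 0| + (c₁ / 2 * ‖w‖ + c₂) * ‖w‖) μ :=
    (integrable_const _).add (((hnorm.const_mul _).add (memLp_const c₂)).integrable_mul hnorm)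
  refine hdom.mono' hg.continuous.aestronglyMeasurable (ae_of_all _ fun w => ?_)
  have := abs_sub_le_of_norm_fderiv_le_affine hc₁ hg hgrow w 0
  rw [sub_zero, norm_zero, add_zero] at this
  rw [norm_eq_abs]
  linarith [abs_sub_abs_le_abs_sub (g w) (g 0)]

end Integrability

theorem integral_mul_le_sqrt_mul_sqrt {α : Type*} [MeasurableSpace α] {μ : Measure α}
    {f g : α → ℝ} (hf : MemLp f 2 μ) (hg : MemLp g 2 μ) :
    ∫ a, f a * g a ∂μ ≤ √(∫ a, f a ^ 2 ∂μ) * √(∫ a, g a ^ 2 ∂μ) := by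
  rw [← ENNReal.ofReal_ofNat] at hf hg
  have holder := integral_mul_norm_le_Lp_mul_Lq Real.HolderConjugate.two_two hf hg
  rw [ENNReal.ofReal_ofNat] at hf hg
  simp only [norm_eq_abs, ← abs_mul, rpow_two, sq_abs, ← sqrt_eq_rpow] at holder
  exact (integral_mono (hf.integrable_mul hg) (hf.integrable_mul hg).abs
    fun a => le_abs_self _).trans holder

section Coupling

variable {E : Type*} [NormedAddCommGroup E] [NormedSpace ℝ E] [MeasurableSpace E] [BorelSpace E]
  [SecondCountableTopology E]

theorem abs_integral_sub_integral_le_of_coupling {γ : Measure (E × E)} [IsProbabilityMeasure γ]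
    (hγ₁ : MemLp id 2 (γ.map Prod.fst)) (hγ₂ : MemLp id 2 (γ.map Prod.snd))
    {g : E → ℝ} {c₁ c₂ : ℝ} (hc₁ : 0 ≤ c₁) (hc₂ : 0 ≤ c₂) (hg : Differentiable ℝ g)
    (hgrow : ∀ w, ‖fderiv ℝ g w‖ ≤ c₁ * ‖w‖ + c₂) :
    |(∫ w, g w ∂γ.map Prod.fst) - ∫ w, g w ∂γ.map Prod.snd| ≤
      (c₁ * √((∫ w, ‖w‖ ^ 2 ∂γ.map Prod.fst + ∫ w, ‖w‖ ^ 2 ∂γ.map Prod.snd) / 2) + c₂) *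
        √(∫ p, ‖p.1 - p.2‖ ^ 2 ∂γ) := by
  have hX : MemLp Prod.fst 2 γ := hγ₁.comp_of_map measurable_fst.aemeasurable
  have hY : MemLp Prod.snd 2 γ := hγ₂.comp_of_map measurable_snd.aemeasurable
  set N : E × E → ℝ := fun p => (‖p.1‖ + ‖p.2‖) / 2
  set D : E × E → ℝ := fun p => ‖p.1 - p.2‖
  have hN : MemLp N 2 γ := by
    simpa only [N, div_eq_mul_inv, Pi.add_apply] using (hX.norm.add hY.norm).mul_const 2⁻¹
  have hD : MemLp D 2 γ := (hX.sub hY).norm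
  have hND : Integrable (fun p => N p * D p) γ := hN.integrable_mul hD
  have hD₁ : Integrable D γ := hD.integrable one_le_two
  have hgX : Integrable (fun p : E × E => g p.1) γ :=
    (integrable_of_norm_fderiv_le_affine hγ₁ hc₁ hg hgrow).comp_measurable measurable_fst
  have hgY : Integrable (fun p : E × E => g p.2) γ :=
    (integrable_of_norm_fderiv_le_affine hγ₂ hc₁ hg hgrow).comp_measurable measurable_snd
  have hN_sq : ∫ p, N p ^ 2 ∂γ ≤
      (∫ w, ‖w‖ ^ 2 ∂γ.map Prod.fst + ∫ w, ‖w‖ ^ 2 ∂γ.map Prod.snd) / 2 := by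
    have hX2 := hX.norm.integrable_sq
    have hY2 := hY.norm.integrable_sq
    rw [integral_map measurable_fst.aemeasurable (by fun_prop),
      integral_map measurable_snd.aemeasurable (by fun_prop), ← integral_add hX2 hY2,
      ← integral_div]
    refine integral_mono hN.integrable_sq ((hX2.add hY2).div_const 2) fun p => ?_
    dsimp only [N]
    nlinarith [sq_nonneg (‖p.1‖ - ‖p.2‖)]
  have hD_le : ∫ p, D p ∂γ ≤ √(∫ p, D p ^ 2 ∂γ) := by
    simpa using integral_mul_le_sqrt_mul_sqrt (memLp_const 1) hD
  rw [integral_map measurable_fst.aemeasurable hg.continuous.aestronglyMeasurable,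
    integral_map measurable_snd.aemeasurable hg.continuous.aestronglyMeasurable,
    ← integral_sub hgX hgY]
  calc |∫ p, g p.1 - g p.2 ∂γ| ≤ ∫ p, |g p.1 - g p.2| ∂γ := abs_integral_le_integral_abs
    _ ≤ ∫ p, c₁ * (N p * D p) + c₂ * D p ∂γ := by
        refine integral_mono (hgX.sub hgY).abs
          ((hND.const_mul c₁).add (hD₁.const_mul c₂))
          fun p => (abs_sub_le_of_norm_fderiv_le_affine hc₁ hg hgrow p.1 p.2).trans_eq (by ring)
    _ = c₁ * ∫ p, N p * D p ∂γ + c₂ * ∫ p, D p ∂γ := by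
        rw [integral_add (hND.const_mul c₁) (hD₁.const_mul c₂), integral_const_mul,
          integral_const_mul]
    _ ≤ c₁ * (√(∫ p, N p ^ 2 ∂γ) * √(∫ p, D p ^ 2 ∂γ)) + c₂ * √(∫ p, D p ^ 2 ∂γ) := by
        gcongr
        exact integral_mul_le_sqrt_mul_sqrt hN hD
    _ ≤ _ := by
        rw [add_mul, mul_assoc]
        gcongr

end Coupling

theorem norm_gradient_eq_norm_fderiv {E : Type*} [NormedAddCommGroup E] [InnerProductSpace ℝ E]
    [CompleteSpace E] (g : E → ℝ) (x : E) : ‖gradient g x‖ = ‖fderiv ℝ g x‖ :=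
  (InnerProductSpace.toDual ℝ E).symm.norm_map _

theorem Real.le_mul_sInf_of_nonneg {s : Set ℝ} {a c : ℝ} (hs : s.Nonempty) (hc : 0 ≤ c)
    (h : ∀ r ∈ s, a ≤ c * r) : a ≤ c * sInf s := by
  rw [← smul_eq_mul, ← Real.sInf_smul_of_nonneg hc]
  exact le_csInf hs.smul_set (by rintro _ ⟨r, hr, rfl⟩; exact h r hr)

theorem wasserstein_continuity_quadratic_growth
    {d : ℕ} (μ ν : Measure (EuclideanSpace ℝ (Fin d)))
    [IsProbabilityMeasure μ] [IsProbabilityMeasure ν]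
    (hμ2 : Integrable (fun w => ‖w‖ ^ 2) μ)
    (hν2 : Integrable (fun w => ‖w‖ ^ 2) ν)
    (g : EuclideanSpace ℝ (Fin d) → ℝ) (c₁ c₂ σ : ℝ)
    (hc₁ : 0 < c₁) (hc₂ : 0 ≤ c₂)
    (hg : ContDiff ℝ 1 g)
    (hgrow : ∀ w, ‖gradient g w‖ ≤ c₁ * ‖w‖ + c₂)
    (hσ : σ ^ 2 = max (∫ w, ‖w‖ ^ 2 ∂μ) (∫ w, ‖w‖ ^ 2 ∂ν))
    (hσ0 : 0 ≤ σ) :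
    |(∫ w, g w ∂μ) - ∫ w, g w ∂ν| ≤ (c₁ * σ + c₂) * wasserstein2 μ ν := by
  have hμ : MemLp id 2 μ := (memLp_two_iff_integrable_sq_norm aestronglyMeasurable_id).2 hμ2
  have hν : MemLp id 2 ν := (memLp_two_iff_integrable_sq_norm aestronglyMeasurable_id).2 hν2
  have hgrow' (w) : ‖fderiv ℝ g w‖ ≤ c₁ * ‖w‖ + c₂ := norm_gradient_eq_norm_fderiv g w ▸ hgrow w
  have hmoments : √((∫ w, ‖w‖ ^ 2 ∂μ + ∫ w, ‖w‖ ^ 2 ∂ν) / 2) ≤ σ := by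
    refine sqrt_le_iff.2 ⟨hσ0, ?_⟩
    rw [hσ]
    linarith [le_max_left (∫ w, ‖w‖ ^ 2 ∂μ) (∫ w, ‖w‖ ^ 2 ∂ν),
      le_max_right (∫ w, ‖w‖ ^ 2 ∂μ) (∫ w, ‖w‖ ^ 2 ∂ν)]
  refine Real.le_mul_sInf_of_nonneg ⟨_, μ.prod ν, inferInstance, Measure.fst_prod,
    Measure.snd_prod, rfl⟩ (by positivity) ?_
  rintro _ ⟨γ, hγ, rfl, rfl, rfl⟩
  rw [← sqrt_eq_rpow]
  exact (abs_integral_sub_integral_le_of_coupling hμ hν hc₁.le hc₂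
    (hg.differentiable one_ne_zero) hgrow').trans (by gcongr)
end

section
/- Let π be the Gibbs probability measure on ℝ^d with density p(w) = exp(-βF(w))/Λ, where F is nonnegative, M-smooth with minimizer w* and minimum F*, satisfies F(w) ≥ (m/3)‖w‖² - (b/2)log 3, β ≥ 2/m, and ∫‖w‖² dπ(w) ≤ (b + d/β)/m. Then ∫F dπ - F* ≤ (d/(2β))·log((eM/m)·(bβ/d + 1)). -/
/-!
The Gibbs density `p = exp (-β F) / Λ` has entropy `-∫ p log p = β ∫ F dπ + log Λ`. Gibbs'
inequality against the centred Gaussian of variance `s` per coordinate bounds this entropy by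
`d/2 · log (2π s) + ∫ ‖w‖² dπ / (2 s)`, which is at most `d/2 · log (2π e s)` once `s` is read off
the second-moment bound. On the other side, the descent lemma `F ≤ F* + M/2 · ‖w - w*‖²` bounds
`Λ` below by a Gaussian integral: `log Λ ≥ -β F* + d/2 · log (2π / (β M))`. Subtracting the two
gives the claim. Integrability is never an issue: the quadratic lower bound on `F` makes
`exp (-β F)` Gaussian-dominated, and the descent lemma gives `F` at most quadratic growth.
-/

open Real MeasureTheory

theorem integral_withDensity_ofReal {α : Type*} [MeasurableSpace α] {μ : Measure α} {p : α → ℝ}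
    (hp : Measurable p) (hp0 : ∀ᵐ x ∂μ, 0 ≤ p x) (f : α → ℝ) :
    ∫ x, f x ∂μ.withDensity (fun x => ENNReal.ofReal (p x)) = ∫ x, p x * f x ∂μ := by
  rw [integral_withDensity_eq_integral_toReal_smul hp.ennreal_ofReal
    (ae_of_all _ fun _ => ENNReal.ofReal_lt_top)]
  refine integral_congr_ae ?_
  filter_upwards [hp0] with x hx
  rw [ENNReal.toReal_ofReal hx, smul_eq_mul]

theorem integral_mul_log_le {α : Type*} [MeasurableSpace α] {μ : Measure α} {p q : α → ℝ}
    (hp : ∀ x, 0 < p x) (hq : ∀ x, 0 < q x) (hp_int : Integrable p μ) (hq_int : Integrable q μ)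
    (hplogp : Integrable (fun x => p x * log (p x)) μ)
    (hplogq : Integrable (fun x => p x * log (q x)) μ) :
    ∫ x, p x * log (q x) ∂μ ≤ ∫ x, p x * log (p x) ∂μ + (∫ x, q x ∂μ - ∫ x, p x ∂μ) := by
  have hqp : Integrable (fun x => q x - p x) μ := hq_int.sub hp_int
  calc ∫ x, p x * log (q x) ∂μ ≤ ∫ x, (p x * log (p x) + (q x - p x)) ∂μ := by
        refine integral_mono hplogq (hplogp.add hqp) fun x => ?_
        have hlog := log_le_sub_one_of_pos (div_pos (hq x) (hp x))
        rw [log_div (hq x).ne' (hp x).ne'] at hlog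
        have := mul_le_mul_of_nonneg_left hlog (hp x).le
        rw [mul_sub, mul_sub_one, mul_div_cancel₀ _ (hp x).ne'] at this
        linarith
    _ = _ := by rw [integral_add hplogp hqp, integral_sub hq_int hp_int]

section Descent

variable {E : Type*} [NormedAddCommGroup E] [InnerProductSpace ℝ E] [CompleteSpace E]

theorem le_add_inner_gradient_add_sq_norm {f : E → ℝ} {M : ℝ} (hf : Differentiable ℝ f)
    (hlip : ∀ x y, ‖gradient f x - gradient f y‖ ≤ M * ‖x - y‖) (x y : E) :
    f y ≤ f x + inner ℝ (gradient f x) (y - x) + M / 2 * ‖y - x‖ ^ 2 := by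
  set u := y - x
  let φ : ℝ → ℝ := fun t =>
    f (x + t • u) - t * inner ℝ (gradient f x) u - M / 2 * t ^ 2 * ‖u‖ ^ 2
  have hφ : ∀ t, HasDerivAt φ
      (inner ℝ (gradient f (x + t • u) - gradient f x) u - M * t * ‖u‖ ^ 2) t := by
    intro t
    have hline : HasDerivAt (fun t : ℝ => x + t • u) u t := by
      simpa using ((hasDerivAt_id t).smul_const u).const_add x
    have hfline := (hf (x + t • u)).hasFDerivAt.comp_hasDerivAt t hline
    rw [← inner_gradient_left] at hfline
    refine ((hfline.sub ((hasDerivAt_id t).mul_const (inner ℝ (gradient f x) u))).sub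
      (((hasDerivAt_pow 2 t).const_mul (M / 2)).mul_const (‖u‖ ^ 2))).congr_deriv ?_
    simp only [inner_sub_left, Nat.cast_ofNat]
    ring
  have hφ_nonpos : ∀ t, 0 ≤ t →
      inner ℝ (gradient f (x + t • u) - gradient f x) u - M * t * ‖u‖ ^ 2 ≤ 0 := by
    intro t ht
    have : inner ℝ (gradient f (x + t • u) - gradient f x) u ≤ M * t * ‖u‖ ^ 2 :=
      calc _ ≤ ‖gradient f (x + t • u) - gradient f x‖ * ‖u‖ := real_inner_le_norm _ _
        _ ≤ M * ‖t • u‖ * ‖u‖ := by gcongr; simpa using hlip (x + t • u) x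
        _ = M * t * ‖u‖ ^ 2 := by rw [norm_smul, Real.norm_of_nonneg ht]; ring
    linarith
  have hanti : AntitoneOn φ (Set.Ici 0) :=
    antitoneOn_of_hasDerivWithinAt_nonpos (convex_Ici 0)
      (fun t _ => (hφ t).continuousAt.continuousWithinAt) (fun t _ => (hφ t).hasDerivWithinAt)
      (fun t ht => hφ_nonpos t (interior_subset ht))
  have h01 := hanti Set.self_mem_Ici (Set.mem_Ici.2 zero_le_one) zero_le_one
  simp only [φ, one_smul, zero_smul, add_zero, u, add_sub_cancel] at h01
  linarith

theorem le_add_sq_norm_sub_of_isLocalMin {f : E → ℝ} {M : ℝ} {x : E} (hf : Differentiable ℝ f)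
    (hlip : ∀ x y, ‖gradient f x - gradient f y‖ ≤ M * ‖x - y‖) (hx : IsLocalMin f x) (y : E) :
    f y ≤ f x + M / 2 * ‖y - x‖ ^ 2 := by
  have hgrad : gradient f x = 0 := by simp [gradient, hx.fderiv_eq_zero]
  simpa [hgrad] using le_add_inner_gradient_add_sq_norm hf hlip x y

end Descent

section QuadraticBounds

variable {E : Type*} [SeminormedAddCommGroup E] {F : E → ℝ}

theorem abs_le_of_quadratic_bounds {a c F₀ M : ℝ} {v₀ : E} (ha : 0 ≤ a) (hM : 0 ≤ M)
    (hlow : ∀ v, a * ‖v‖ ^ 2 - c ≤ F v) (hup : ∀ v, F v ≤ F₀ + M / 2 * ‖v - v₀‖ ^ 2) (v : E) :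
    |F v| ≤ (|c| + |F₀| + M * ‖v₀‖ ^ 2) + M * ‖v‖ ^ 2 := by
  have hsq : ‖v - v₀‖ ^ 2 ≤ 2 * ‖v‖ ^ 2 + 2 * ‖v₀‖ ^ 2 := by
    nlinarith [norm_sub_le v v₀, norm_nonneg (v - v₀), sq_nonneg (‖v‖ - ‖v₀‖)]
  refine abs_le.2 ⟨?_, ?_⟩
  · nlinarith [hlow v, le_abs_self c, abs_nonneg F₀, mul_nonneg ha (sq_nonneg ‖v‖),
      mul_nonneg hM (sq_nonneg ‖v₀‖), mul_nonneg hM (sq_nonneg ‖v‖)]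
  · nlinarith [hup v, le_abs_self F₀, abs_nonneg c, mul_le_mul_of_nonneg_left hsq hM]

theorem exp_neg_mul_le_of_quadratic_le {β a c : ℝ} (hβ : 0 ≤ β)
    (hlow : ∀ v, a * ‖v‖ ^ 2 - c ≤ F v) (v : E) :
    exp (-β * F v) ≤ exp (β * c) * exp (-(β * a) * ‖v‖ ^ 2) := by
  rw [← exp_add, exp_le_exp]
  nlinarith [mul_le_mul_of_nonneg_left (hlow v) hβ]

end QuadraticBounds

section Gaussian

variable {V : Type*} [NormedAddCommGroup V] [InnerProductSpace ℝ V] [FiniteDimensional ℝ V]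
  [MeasurableSpace V] [BorelSpace V]

theorem integrable_exp_neg_mul_sq_norm {a : ℝ} (ha : 0 < a) :
    Integrable fun v : V => exp (-a * ‖v‖ ^ 2) := by
  have h := (GaussianFourier.integrable_cexp_neg_mul_sq_norm_add
    (b := (a : ℂ)) (by simpa using ha) 0 (0 : V)).norm
  refine h.congr (ae_of_all _ fun v => ?_)
  simp [Complex.norm_exp, ← Complex.ofReal_pow, ← Complex.ofReal_mul]

theorem integral_exp_neg_mul_sq_norm_sub {a : ℝ} (ha : 0 < a) (v₀ : V) :
    ∫ v, exp (-a * ‖v - v₀‖ ^ 2) = (π / a) ^ (Module.finrank ℝ V / 2 : ℝ) := by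
  rw [integral_sub_right_eq_self (fun v => exp (-a * ‖v‖ ^ 2)) v₀,
    GaussianFourier.integral_rexp_neg_mul_sq_norm ha]

theorem integrable_sq_norm_mul_exp_neg_mul_sq_norm {a : ℝ} (ha : 0 < a) :
    Integrable fun v : V => ‖v‖ ^ 2 * exp (-a * ‖v‖ ^ 2) := by
  refine ((integrable_exp_neg_mul_sq_norm (half_pos ha)).const_mul (2 / a)).mono'
    (by fun_prop) (ae_of_all _ fun v => ?_)
  have hx : a / 2 * ‖v‖ ^ 2 ≤ exp (a / 2 * ‖v‖ ^ 2) := by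
    linarith [add_one_le_exp (a / 2 * ‖v‖ ^ 2)]
  have hsplit : exp (-a * ‖v‖ ^ 2) = exp (-(a / 2) * ‖v‖ ^ 2) / exp (a / 2 * ‖v‖ ^ 2) := by
    rw [← exp_sub]; ring_nf
  rw [norm_of_nonneg (by positivity), hsplit, mul_div_assoc', div_le_iff₀ (exp_pos _)]
  calc ‖v‖ ^ 2 * exp (-(a / 2) * ‖v‖ ^ 2)
      = 2 / a * (a / 2 * ‖v‖ ^ 2) * exp (-(a / 2) * ‖v‖ ^ 2) := by field_simp
    _ ≤ 2 / a * exp (a / 2 * ‖v‖ ^ 2) * exp (-(a / 2) * ‖v‖ ^ 2) := by gcongr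
    _ = _ := by ring

theorem integrable_of_norm_le_quadratic_mul_exp {f : V → ℝ} {a A B : ℝ} (ha : 0 < a)
    (hf : AEStronglyMeasurable f)
    (hle : ∀ v, ‖f v‖ ≤ (A + B * ‖v‖ ^ 2) * exp (-a * ‖v‖ ^ 2)) : Integrable f := by
  refine (((integrable_exp_neg_mul_sq_norm ha).const_mul A).add
    ((integrable_sq_norm_mul_exp_neg_mul_sq_norm ha).const_mul B)).mono' hf
    (ae_of_all _ fun v => (hle v).trans_eq ?_)
  simp only [Pi.add_apply]
  ring

theorem neg_integral_mul_log_le_of_gaussian {p : V → ℝ} (hp : ∀ v, 0 < p v)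
    (hp_int : Integrable p) (hp_one : ∫ v, p v = 1)
    (hplogp : Integrable fun v => p v * log (p v))
    (hp_sq : Integrable fun v => p v * ‖v‖ ^ 2) {s : ℝ} (hs : 0 < s) :
    -∫ v, p v * log (p v) ≤
      Module.finrank ℝ V / 2 * log (2 * π * s) + (∫ v, p v * ‖v‖ ^ 2) / (2 * s) := by
  set n : ℝ := (Module.finrank ℝ V : ℝ)
  have h2πs : 0 < 2 * π * s := by positivity
  set q : V → ℝ := fun v => (2 * π * s) ^ (-n / 2) * exp (-(2 * s)⁻¹ * ‖v‖ ^ 2)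
  have hq : ∀ v, 0 < q v := fun v => by positivity
  have hq_int : Integrable q := (integrable_exp_neg_mul_sq_norm (by positivity)).const_mul _
  have hq_one : ∫ v, q v = 1 := by
    rw [integral_const_mul, GaussianFourier.integral_rexp_neg_mul_sq_norm (by positivity),
      div_inv_eq_mul, ← mul_assoc, mul_comm π 2, ← rpow_add h2πs,
      neg_div, neg_add_cancel, rpow_zero]
  have hlogq : ∀ v, p v * log (q v) =
      -(n / 2 * log (2 * π * s)) * p v - (2 * s)⁻¹ * (p v * ‖v‖ ^ 2) := fun v => by
    rw [log_mul (by positivity) (exp_pos _).ne', log_rpow h2πs, log_exp]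
    ring
  have hplogq : Integrable fun v => p v * log (q v) := by
    simp_rw [hlogq]
    exact (hp_int.const_mul _).sub (hp_sq.const_mul _)
  have hcross : ∫ v, p v * log (q v) =
      -(n / 2 * log (2 * π * s)) - (∫ v, p v * ‖v‖ ^ 2) / (2 * s) := by
    simp_rw [hlogq]
    rw [integral_sub (hp_int.const_mul _) (hp_sq.const_mul _), integral_const_mul,
      integral_const_mul, hp_one]
    ring
  have hgibbs := integral_mul_log_le hp hq hp_int hq_int hplogp hplogq
  rw [hcross, hq_one, hp_one] at hgibbs
  linarith

theorem le_log_integral_exp_neg_mul {F : V → ℝ} {β M F₀ : ℝ} {v₀ : V} (hβ : 0 < β) (hM : 0 < M)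
    (hF_int : Integrable fun v => exp (-β * F v))
    (hup : ∀ v, F v ≤ F₀ + M / 2 * ‖v - v₀‖ ^ 2) :
    -β * F₀ + Module.finrank ℝ V / 2 * log (2 * π / (β * M)) ≤ log (∫ v, exp (-β * F v)) := by
  have hβM : 0 < β * M / 2 := by positivity
  have hlower : exp (-β * F₀) * (2 * π / (β * M)) ^ (Module.finrank ℝ V / 2 : ℝ) ≤
      ∫ v, exp (-β * F v) :=
    calc _ = ∫ v, exp (-β * F₀) * exp (-(β * M / 2) * ‖v - v₀‖ ^ 2) := by
          rw [integral_const_mul, integral_exp_neg_mul_sq_norm_sub hβM]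
          congr 2
          field_simp
      _ ≤ ∫ v, exp (-β * F v) := by
          refine integral_mono (((integrable_exp_neg_mul_sq_norm hβM).comp_sub_right v₀).const_mul
            _) hF_int fun v => ?_
          rw [← exp_add, exp_le_exp]
          nlinarith [mul_le_mul_of_nonneg_left (hup v) hβ.le]
  have := log_le_log (by positivity) hlower
  rwa [log_mul (exp_pos _).ne' (by positivity), log_exp, log_rpow (by positivity)] at this

end Gaussian

section Gibbs

variable {V : Type*} [NormedAddCommGroup V] [InnerProductSpace ℝ V] [FiniteDimensional ℝ V]
  [MeasurableSpace V] [BorelSpace V]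

noncomputable def gibbsDensity (β : ℝ) (F : V → ℝ) (v : V) : ℝ :=
  exp (-β * F v) / ∫ u, exp (-β * F u)

variable {β a c : ℝ} {F : V → ℝ}

theorem integrable_exp_neg_mul_of_quadratic_le (hβ : 0 < β) (ha : 0 < a) (hF : Continuous F)
    (hlow : ∀ v, a * ‖v‖ ^ 2 - c ≤ F v) : Integrable fun v => exp (-β * F v) :=
  integrable_of_norm_le_quadratic_mul_exp (A := exp (β * c)) (B := 0) (mul_pos hβ ha)
    (by fun_prop) fun v => by
      simpa [norm_of_nonneg (exp_pos _).le] using exp_neg_mul_le_of_quadratic_le hβ.le hlow v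

theorem continuous_gibbsDensity (hF : Continuous F) : Continuous (gibbsDensity β F) := by
  unfold gibbsDensity
  fun_prop

theorem gibbsDensity_pos (hβ : 0 < β) (ha : 0 < a) (hF : Continuous F)
    (hlow : ∀ v, a * ‖v‖ ^ 2 - c ≤ F v) (v : V) : 0 < gibbsDensity β F v :=
  div_pos (exp_pos _) (integral_exp_pos (integrable_exp_neg_mul_of_quadratic_le hβ ha hF hlow))

theorem integrable_gibbsDensity (hβ : 0 < β) (ha : 0 < a) (hF : Continuous F)
    (hlow : ∀ v, a * ‖v‖ ^ 2 - c ≤ F v) : Integrable (gibbsDensity β F) :=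
  (integrable_exp_neg_mul_of_quadratic_le hβ ha hF hlow).div_const _

theorem integral_gibbsDensity (hβ : 0 < β) (ha : 0 < a) (hF : Continuous F)
    (hlow : ∀ v, a * ‖v‖ ^ 2 - c ≤ F v) : ∫ v, gibbsDensity β F v = 1 := by
  unfold gibbsDensity
  rw [integral_div, div_self
    (integral_exp_pos (integrable_exp_neg_mul_of_quadratic_le hβ ha hF hlow)).ne']

theorem integrable_gibbsDensity_mul {g : V → ℝ} {A B : ℝ} (hβ : 0 < β) (ha : 0 < a)
    (hF : Continuous F) (hlow : ∀ v, a * ‖v‖ ^ 2 - c ≤ F v) (hg : Continuous g)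
    (hg_le : ∀ v, |g v| ≤ A + B * ‖v‖ ^ 2) :
    Integrable fun v => gibbsDensity β F v * g v := by
  set Λ := ∫ u, exp (-β * F u)
  have hΛ : 0 < Λ := integral_exp_pos (integrable_exp_neg_mul_of_quadratic_le hβ ha hF hlow)
  refine integrable_of_norm_le_quadratic_mul_exp (A := exp (β * c) / Λ * A)
    (B := exp (β * c) / Λ * B) (mul_pos hβ ha)
    ((continuous_gibbsDensity hF).mul hg).aestronglyMeasurable fun v => ?_
  rw [norm_mul, norm_of_nonneg (gibbsDensity_pos hβ ha hF hlow v).le, norm_eq_abs]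
  calc gibbsDensity β F v * |g v| = exp (-β * F v) / Λ * |g v| := rfl
    _ ≤ exp (β * c) * exp (-(β * a) * ‖v‖ ^ 2) / Λ * (A + B * ‖v‖ ^ 2) := by
        gcongr
        · exact exp_neg_mul_le_of_quadratic_le hβ.le hlow v
        · exact hg_le v
    _ = _ := by ring

theorem gibbsDensity_mul_log_gibbsDensity (hβ : 0 < β) (ha : 0 < a) (hF : Continuous F)
    (hlow : ∀ v, a * ‖v‖ ^ 2 - c ≤ F v) (v : V) :
    gibbsDensity β F v * log (gibbsDensity β F v) =
      -β * (gibbsDensity β F v * F v) - log (∫ u, exp (-β * F u)) * gibbsDensity β F v := by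
  rw [gibbsDensity, log_div (exp_pos _).ne'
    (integral_exp_pos (integrable_exp_neg_mul_of_quadratic_le hβ ha hF hlow)).ne', log_exp]
  ring

theorem integrable_gibbsDensity_mul_log (hβ : 0 < β) (ha : 0 < a) (hF : Continuous F)
    (hlow : ∀ v, a * ‖v‖ ^ 2 - c ≤ F v) (hpF : Integrable fun v => gibbsDensity β F v * F v) :
    Integrable fun v => gibbsDensity β F v * log (gibbsDensity β F v) := by
  simp_rw [gibbsDensity_mul_log_gibbsDensity hβ ha hF hlow]
  exact (hpF.const_mul _).sub ((integrable_gibbsDensity hβ ha hF hlow).const_mul _)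

theorem neg_integral_gibbsDensity_mul_log (hβ : 0 < β) (ha : 0 < a) (hF : Continuous F)
    (hlow : ∀ v, a * ‖v‖ ^ 2 - c ≤ F v) (hpF : Integrable fun v => gibbsDensity β F v * F v) :
    -∫ v, gibbsDensity β F v * log (gibbsDensity β F v) =
      β * (∫ v, gibbsDensity β F v * F v) + log (∫ u, exp (-β * F u)) := by
  simp_rw [gibbsDensity_mul_log_gibbsDensity hβ ha hF hlow]
  rw [integral_sub (hpF.const_mul _) ((integrable_gibbsDensity hβ ha hF hlow).const_mul _),
    integral_const_mul, integral_const_mul, integral_gibbsDensity hβ ha hF hlow]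
  ring

theorem mul_integral_gibbsDensity_mul_sub_le {M F₀ s : ℝ} {v₀ : V} (hβ : 0 < β) (ha : 0 < a)
    (hF : Continuous F) (hlow : ∀ v, a * ‖v‖ ^ 2 - c ≤ F v) (hM : 0 < M)
    (hup : ∀ v, F v ≤ F₀ + M / 2 * ‖v - v₀‖ ^ 2) (hs : 0 < s) :
    β * ((∫ v, gibbsDensity β F v * F v) - F₀) ≤
      Module.finrank ℝ V / 2 * log (β * M * s) +
        (∫ v, gibbsDensity β F v * ‖v‖ ^ 2) / (2 * s) := by
  have hpF := integrable_gibbsDensity_mul hβ ha hF hlow hF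
    (abs_le_of_quadratic_bounds ha.le hM.le hlow hup)
  have hp_sq := integrable_gibbsDensity_mul (A := 0) (B := 1) hβ ha hF hlow
    (continuous_norm.pow 2) fun v => by simp
  have hentropy := neg_integral_mul_log_le_of_gaussian (gibbsDensity_pos hβ ha hF hlow)
    (integrable_gibbsDensity hβ ha hF hlow) (integral_gibbsDensity hβ ha hF hlow)
    (integrable_gibbsDensity_mul_log hβ ha hF hlow hpF) hp_sq hs
  have hlaplace := le_log_integral_exp_neg_mul hβ hM
    (integrable_exp_neg_mul_of_quadratic_le hβ ha hF hlow) hup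
  have hlog : log (2 * π * s) = log (β * M * s) + log (2 * π / (β * M)) := by
    rw [← log_mul (by positivity) (by positivity)]
    congr 1
    field_simp
  rw [neg_integral_gibbsDensity_mul_log hβ ha hF hlow hpF, hlog, mul_add] at hentropy
  linarith

theorem mul_integral_gibbsDensity_mul_sub_le_of_moment_le {M F₀ s : ℝ} {v₀ : V} (hβ : 0 < β)
    (ha : 0 < a) (hF : Continuous F) (hlow : ∀ v, a * ‖v‖ ^ 2 - c ≤ F v) (hM : 0 < M)
    (hup : ∀ v, F v ≤ F₀ + M / 2 * ‖v - v₀‖ ^ 2) (hs : 0 < s)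
    (hmoment : ∫ v, gibbsDensity β F v * ‖v‖ ^ 2 ≤ Module.finrank ℝ V * s) :
    β * ((∫ v, gibbsDensity β F v * F v) - F₀) ≤
      Module.finrank ℝ V / 2 * log (exp 1 * (β * M * s)) := by
  have hbound := mul_integral_gibbsDensity_mul_sub_le hβ ha hF hlow hM hup hs
  have hvar : (∫ v, gibbsDensity β F v * ‖v‖ ^ 2) / (2 * s) ≤ Module.finrank ℝ V / 2 := by
    rw [div_le_iff₀ (by positivity)]
    linarith
  rw [log_mul (exp_pos 1).ne' (by positivity), log_exp]
  linarith

end Gibbs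

theorem gibbs_almost_ERM_general
    {d : ℕ} (F : EuclideanSpace ℝ (Fin d) → ℝ) (M m b β Fstar Λ : ℝ)
    (wstar : EuclideanSpace ℝ (Fin d))
    (πz : Measure (EuclideanSpace ℝ (Fin d)))
    (hM : 0 < M) (hm : 0 < m) (hb : 0 ≤ b)
    (hβpos : 0 < β)
    (hF : ContDiff ℝ 1 F)
    (hsmooth : ∀ w v : EuclideanSpace ℝ (Fin d),
      ‖gradient F w - gradient F v‖ ≤ M * ‖w - v‖)
    (hmin : ∀ w, F wstar ≤ F w)
    (hFstar : F wstar = Fstar)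
    (hlower : ∀ w : EuclideanSpace ℝ (Fin d),
      F w ≥ m / 3 * ‖w‖ ^ 2 - b / 2 * Real.log 3)
    (hΛ : Λ = ∫ w : EuclideanSpace ℝ (Fin d), Real.exp (-β * F w))
    (hπ : πz = volume.withDensity
      (fun w => ENNReal.ofReal (Real.exp (-β * F w) / Λ)))
    (hmoment : ∫ w, ‖w‖ ^ 2 ∂πz ≤ (b + d / β) / m) :
    (∫ w, F w ∂πz) - Fstar ≤
      (d : ℝ) / (2 * β) *
        Real.log (Real.exp 1 * M / m * (b * β / d + 1)) := by
  have hupper : ∀ w, F w ≤ Fstar + M / 2 * ‖w - wstar‖ ^ 2 := hFstar ▸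
    le_add_sq_norm_sub_of_isLocalMin (hF.differentiable one_ne_zero) hsmooth (.of_forall hmin)
  have hdensity : ∀ g : EuclideanSpace ℝ (Fin d) → ℝ,
      ∫ w, g w ∂πz = ∫ w, gibbsDensity β F w * g w := by
    subst hπ hΛ
    exact integral_withDensity_ofReal (continuous_gibbsDensity hF.continuous).measurable
      (ae_of_all _ fun w => (gibbsDensity_pos hβpos (by positivity) hF.continuous hlower w).le)
  rw [hdensity] at hmoment ⊢
  suffices h : β * ((∫ w, gibbsDensity β F w * F w) - Fstar) ≤
      d / 2 * log (exp 1 * M / m * (b * β / d + 1)) by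
    rw [div_mul_eq_mul_div, le_div_iff₀' (by positivity)]
    linarith
  rcases Nat.eq_zero_or_pos d with rfl | hd
  · simpa [EuclideanSpace.norm_eq] using mul_integral_gibbsDensity_mul_sub_le hβpos
      (by positivity) hF.continuous hlower hM hupper one_pos
  · have hd : (0 : ℝ) < d := Nat.cast_pos.2 hd
    have hs : 0 < (b + d / β) / (m * d) := by positivity
    convert mul_integral_gibbsDensity_mul_sub_le_of_moment_le hβpos (by positivity)
      hF.continuous hlower hM hupper hs ?_ using 3
    · rw [finrank_euclideanSpace_fin]
    · field_simp
    · rw [finrank_euclideanSpace_fin]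
      exact hmoment.trans_eq (by field_simp)

theorem gibbs_almost_ERM
    {d : ℕ} (F : EuclideanSpace ℝ (Fin d) → ℝ) (M m b β Fstar Λ : ℝ)
    (wstar : EuclideanSpace ℝ (Fin d))
    (πz : Measure (EuclideanSpace ℝ (Fin d)))
    (hM : 0 < M) (hm : 0 < m) (hb : 0 ≤ b) (hβ : β ≥ 2 / m)
    (hβpos : 0 < β)
    (hF : ContDiff ℝ 1 F)
    (hnonneg : ∀ w, 0 ≤ F w)
    (hsmooth : ∀ w v : EuclideanSpace ℝ (Fin d),
      ‖gradient F w - gradient F v‖ ≤ M * ‖w - v‖)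
    (hmin : ∀ w, F wstar ≤ F w)
    (hFstar : F wstar = Fstar)
    (hlower : ∀ w : EuclideanSpace ℝ (Fin d),
      F w ≥ m / 3 * ‖w‖ ^ 2 - b / 2 * Real.log 3)
    (hΛ : Λ = ∫ w : EuclideanSpace ℝ (Fin d), Real.exp (-β * F w))
    (hπ : πz = volume.withDensity
      (fun w => ENNReal.ofReal (Real.exp (-β * F w) / Λ)))
    (hmoment : ∫ w, ‖w‖ ^ 2 ∂πz ≤ (b + d / β) / m) :
    (∫ w, F w ∂πz) - Fstar ≤
      (d : ℝ) / (2 * β) *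
        Real.log (Real.exp 1 * M / m * (b * β / d + 1)) :=
  gibbs_almost_ERM_general F M m b β Fstar Λ wstar πz hM hm hb hβpos hF hsmooth hmin hFstar hlower
    hΛ hπ hmoment
end
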